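/- arXiv:2109.05059 — 9 statements merged into one kernel-verified Lean document; each statement's English description precedes it below -/
import Mathlib

section
/- Let 0 < m ≤ L, let ρ satisfy (√L − √m)/(√L + √m) ≤ ρ < 1, and set α = (1−ρ)²/m. Then for every q with m ≤ q ≤ L, the discriminant Δ = (ρ² + 1 − αq)² − 4ρ² satisfies Δ ≤ 0. -/
theorem stmt_0 (m L ρ q : ℝ) (hm : 0 < m) (hmL : m ≤ L)
    (hρ1 : (Real.sqrt L - Real.sqrt m) / (Real.sqrt L + Real.sqrt m) ≤ ρ) (hρ2 : ρ < 1)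
    (hq1 : m ≤ q) (hq2 : q ≤ L) :
    (ρ ^ 2 + 1 - ((1 - ρ) ^ 2 / m) * q) ^ 2 - 4 * ρ ^ 2 ≤ 0 := by
  set s := Real.sqrt m with hs
  set t := Real.sqrt L with ht
  have hs0 : 0 < s := Real.sqrt_pos.mpr hm
  have hst : s ≤ t := Real.sqrt_le_sqrt hmL
  have hs2 : s ^ 2 = m := Real.sq_sqrt hm.le
  have ht2 : t ^ 2 = L := Real.sq_sqrt (hm.le.trans hmL)
  have hden : 0 < t + s := by linarith
  have hρ' : t - s ≤ ρ * (t + s) := by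
    rw [div_le_iff₀ hden] at hρ1; linarith
  have hρ0 : 0 ≤ ρ := by
    have : (0:ℝ) ≤ (t - s) / (t + s) := div_nonneg (by linarith) hden.le
    linarith
  -- (1-ρ) t ≤ (1+ρ) s
  have key : (1 - ρ) * t ≤ (1 + ρ) * s := by nlinarith
  -- upper bound: (1-ρ)^2 * L ≤ (1+ρ)^2 * m
  have h0 : (0:ℝ) ≤ (1 - ρ) * t := by nlinarith
  have hup : (1 - ρ) ^ 2 * L ≤ (1 + ρ) ^ 2 * m := by
    nlinarith [mul_le_mul key key h0 (by nlinarith : (0:ℝ) ≤ (1 + ρ) * s)]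
  have h1 : (1 - ρ) ^ 2 / m * q ≤ (1 + ρ) ^ 2 := by
    rw [div_mul_eq_mul_div, div_le_iff₀ hm]
    nlinarith
  have h2 : (1 - ρ) ^ 2 ≤ (1 - ρ) ^ 2 / m * q := by
    rw [div_mul_eq_mul_div, le_div_iff₀ hm]
    nlinarith
  nlinarith [sq_nonneg (1 - ρ), sq_nonneg (1 + ρ)]
end

section
/- Let 0 < m ≤ L, let ρ satisfy (√L − √m)/(√L + √m) ≤ ρ < 1, and set α = (1−ρ)²/m, β = ρ². Define h(q) = (1−ρ)(1+ρ²) / ( q(1+ρ)(2m − q + 2qρ + 2mρ² − qρ²) ) for q ∈ [m,L]. Then h(m) ≥ h(L). -/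
theorem stmt_1 (m L ρ : ℝ) (hm : 0 < m) (hmL : m ≤ L)
    (hρ1 : (Real.sqrt L - Real.sqrt m) / (Real.sqrt L + Real.sqrt m) ≤ ρ) (hρ2 : ρ < 1)
    (h : ℝ → ℝ)
    (hdef : ∀ q : ℝ, h q =
      (1 - ρ) * (1 + ρ ^ 2) /
        (q * (1 + ρ) * (2 * m - q + 2 * q * ρ + 2 * m * ρ ^ 2 - q * ρ ^ 2))) :
    h L ≤ h m := by
  have hL : 0 < L := lt_of_lt_of_le hm hmL
  have hsm : 0 < Real.sqrt m := Real.sqrt_pos.mpr hm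
  have hsL : 0 < Real.sqrt L := Real.sqrt_pos.mpr hL
  have hsmL : Real.sqrt m ≤ Real.sqrt L := Real.sqrt_le_sqrt hmL
  have hsum : 0 < Real.sqrt L + Real.sqrt m := by linarith
  have hρ0 : 0 ≤ ρ := le_trans (div_nonneg (by linarith) hsum.le) hρ1
  have h1 : Real.sqrt L - Real.sqrt m ≤ ρ * (Real.sqrt L + Real.sqrt m) :=
    (div_le_iff₀ hsum).mp hρ1
  have h2 : Real.sqrt L * (1 - ρ) ≤ Real.sqrt m * (1 + ρ) := by nlinarith
  have key : L * (1 - ρ) ^ 2 ≤ m * (1 + ρ) ^ 2 := by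
    have h3 : (Real.sqrt L * (1 - ρ)) ^ 2 ≤ (Real.sqrt m * (1 + ρ)) ^ 2 := by
      apply pow_le_pow_left₀ (by nlinarith) h2
    have hL2 : Real.sqrt L ^ 2 = L := Real.sq_sqrt hL.le
    have hm2 : Real.sqrt m ^ 2 = m := Real.sq_sqrt hm.le
    nlinarith [h3]
  rw [hdef, hdef]
  have hDm : 0 < m * (1 + ρ) * (2 * m - m + 2 * m * ρ + 2 * m * ρ ^ 2 - m * ρ ^ 2) := by
    have : m * (1 + ρ) * (2 * m - m + 2 * m * ρ + 2 * m * ρ ^ 2 - m * ρ ^ 2)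
        = m ^ 2 * (1 + ρ) ^ 3 := by ring
    rw [this]
    have h1ρ : (0:ℝ) < 1 + ρ := by linarith
    positivity
  have hDmL : m * (1 + ρ) * (2 * m - m + 2 * m * ρ + 2 * m * ρ ^ 2 - m * ρ ^ 2) ≤
      L * (1 + ρ) * (2 * m - L + 2 * L * ρ + 2 * m * ρ ^ 2 - L * ρ ^ 2) := by
    have hfac : L * (1 + ρ) * (2 * m - L + 2 * L * ρ + 2 * m * ρ ^ 2 - L * ρ ^ 2) -
        m * (1 + ρ) * (2 * m - m + 2 * m * ρ + 2 * m * ρ ^ 2 - m * ρ ^ 2) =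
        (1 + ρ) * ((L - m) * (m * (1 + ρ) ^ 2 - L * (1 - ρ) ^ 2)) := by ring
    have hnn : 0 ≤ (1 + ρ) * ((L - m) * (m * (1 + ρ) ^ 2 - L * (1 - ρ) ^ 2)) :=
      mul_nonneg (by linarith) (mul_nonneg (by linarith) (by linarith))
    linarith
  exact div_le_div_of_nonneg_left (by nlinarith) hDm hDmL
end

section
/- Fix real α, β, η with α > 0, and for q ∈ ℝ define the 2×2 real matrix M(q) with first row (β + 1 − α(η+1)q, −β + αηq) and second row (1, 0). For any ρ > 0, the set { q ∈ ℝ : spectral radius of M(q) < ρ } is an interval (possibly empty). Consequently q ↦ spectral radius of M(q) is quasiconvex. -/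
/-!
The characteristic polynomial of `M q` is `z ^ 2 - T z - S` with `T = β + 1 - α (η + 1) q` and
`S = -β + α η q`. By Jury's criterion, its roots lie in the open disc of radius `ρ` exactly when
`(T, S)` lies in an open triangle: for real roots `x, y` the conditions read
`(ρ - x) (ρ - y) > 0`, `(ρ + x) (ρ + y) > 0`, `|x y| < ρ ^ 2`. Since `q ↦ (T, S)` is affine, each
strict sublevel set of the spectral radius is the preimage of a convex set under an affine map,
hence an interval, and a function whose strict sublevel sets are convex is quasiconvex.
-/

open Set

/-- Jury's conditions for both roots of `z ^ 2 - T * z - S`, the characteristic polynomial of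
`!![T, S; 1, 0]`, to lie in the open disc of radius `ρ`, as a region of the `(T, S)`-plane. -/
def juryRegion (ρ : ℝ) : Set (ℝ × ℝ) :=
  {p | |p.2| < ρ ^ 2 ∧ 0 < ρ ^ 2 - ρ * p.1 - p.2 ∧ 0 < ρ ^ 2 + ρ * p.1 - p.2}

lemma convex_juryRegion (ρ : ℝ) : Convex ℝ (juryRegion ρ) := by
  refine convex_iff_forall_pos.2 fun x hx y hy a b ha hb hab => ?_
  obtain ⟨hx₁, hx₂, hx₃⟩ := hx
  obtain ⟨hy₁, hy₂, hy₃⟩ := hy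
  rw [abs_lt] at hx₁ hy₁
  simp only [juryRegion, mem_ofPred_eq, Prod.fst_add, Prod.snd_add, Prod.smul_fst, Prod.smul_snd,
    smul_eq_mul, abs_lt]
  refine ⟨⟨?_, ?_⟩, ?_, ?_⟩ <;>
    nlinarith [mul_pos ha (sub_pos.2 hx₁.2), mul_pos hb (sub_pos.2 hy₁.2),
      mul_pos ha (neg_lt_iff_pos_add.1 hx₁.1), mul_pos hb (neg_lt_iff_pos_add.1 hy₁.1),
      mul_pos ha hx₂, mul_pos hb hy₂, mul_pos ha hx₃, mul_pos hb hy₃]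

lemma abs_lt_and_abs_lt_iff_mem_juryRegion {x y ρ : ℝ} (hρ : 0 < ρ) :
    |x| < ρ ∧ |y| < ρ ↔ (x + y, -(x * y)) ∈ juryRegion ρ := by
  have hsub : ρ ^ 2 - ρ * (x + y) - -(x * y) = (ρ - x) * (ρ - y) := by ring
  have hadd : ρ ^ 2 + ρ * (x + y) - -(x * y) = (ρ + x) * (ρ + y) := by ring
  simp only [juryRegion, mem_ofPred_eq, abs_neg, hsub, hadd]
  constructor
  · rintro ⟨hx, hy⟩
    rw [abs_lt] at hx hy
    refine ⟨?_, mul_pos (by linarith) (by linarith), mul_pos (by linarith) (by linarith)⟩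
    rw [abs_mul, sq]
    exact mul_lt_mul'' (abs_lt.2 hx) (abs_lt.2 hy) (abs_nonneg x) (abs_nonneg y)
  · rintro ⟨hprod, hminus, hplus⟩
    -- `(ρ - u) * (ρ - v) > 0` leaves `u, v < ρ` or `u, v > ρ`; the latter gives `u * v > ρ ^ 2`.
    have below : ∀ u v : ℝ, |u * v| < ρ ^ 2 → 0 < (ρ - u) * (ρ - v) → u < ρ ∧ v < ρ := by
      intro u v huv h
      rcases mul_pos_iff.1 h with ⟨hu, hv⟩ | ⟨hu, hv⟩
      · exact ⟨by linarith, by linarith⟩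
      · nlinarith [le_abs_self (u * v), mul_lt_mul'' (sub_neg.1 hu) (sub_neg.1 hv) hρ.le hρ.le]
    obtain ⟨hx, hy⟩ := below x y hprod hminus
    obtain ⟨hx', hy'⟩ := below (-x) (-y) (by rwa [neg_mul_neg])
      (by rwa [sub_neg_eq_add, sub_neg_eq_add])
    exact ⟨abs_lt.2 ⟨by linarith, hx⟩, abs_lt.2 ⟨by linarith, hy⟩⟩

lemma norm_lt_iff_mem_juryRegion {z : ℂ} {ρ : ℝ} (hρ : 0 < ρ) :
    ‖z‖ < ρ ↔ (2 * z.re, -Complex.normSq z) ∈ juryRegion ρ := by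
  simp only [juryRegion, mem_ofPred_eq, abs_neg, Complex.normSq_eq_norm_sq,
    abs_of_nonneg (sq_nonneg ‖z‖)]
  constructor
  · intro hz
    have hre := abs_le.1 (Complex.abs_re_le_norm z)
    have hgap : 0 < (ρ - ‖z‖) ^ 2 := pow_pos (sub_pos.2 hz) 2
    refine ⟨pow_lt_pow_left₀ hz (norm_nonneg z) two_ne_zero, ?_, ?_⟩
    · nlinarith [mul_le_mul_of_nonneg_left hre.2 hρ.le]
    · nlinarith [mul_le_mul_of_nonneg_left hre.1 hρ.le]
  · rintro ⟨hsq, -, -⟩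
    exact lt_of_pow_lt_pow_left₀ 2 hρ.le hsq

lemma spectrum_companion {K : Type*} [Field K] {a b r₁ r₂ : K} (hsum : r₁ + r₂ = a)
    (hprod : r₁ * r₂ = -b) : spectrum K !![a, b; 1, 0] = {r₁, r₂} := by
  ext z
  have hdet : (algebraMap K (Matrix (Fin 2) (Fin 2) K) z - !![a, b; 1, 0]).det =
      (z - r₁) * (z - r₂) := by
    rw [Matrix.det_fin_two]
    simp only [Matrix.sub_apply, Matrix.algebraMap_matrix_apply, Algebra.algebraMap_self,
      RingHom.id_apply, Matrix.of_apply, Matrix.cons_val', Matrix.cons_val_zero,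
      Matrix.cons_val_fin_one, Matrix.cons_val_one, ↓reduceIte, zero_ne_one, one_ne_zero,
      sub_zero, zero_sub, mul_neg, mul_one, neg_neg]
    linear_combination z * hsum - hprod
  rw [spectrum.mem_iff, Matrix.isUnit_iff_isUnit_det, isUnit_iff_ne_zero, not_not, hdet,
    mul_eq_zero, sub_eq_zero, sub_eq_zero, mem_insert_iff, mem_singleton_iff]

lemma spectralRadius_companion {𝕜 : Type*} [NormedField 𝕜] {a b r₁ r₂ : 𝕜}
    (hsum : r₁ + r₂ = a) (hprod : r₁ * r₂ = -b) :
    spectralRadius 𝕜 !![a, b; 1, 0] = ENNReal.ofReal (max ‖r₁‖ ‖r₂‖) := by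
  rw [spectralRadius, spectrum_companion hsum hprod, iSup_pair, ENNReal.ofReal_max,
    ofReal_norm, ofReal_norm]
  rfl

lemma spectralRadius_companion_lt_iff {T S ρ : ℝ} (hρ : 0 < ρ) :
    spectralRadius ℂ ((!![T, S; 1, 0] : Matrix (Fin 2) (Fin 2) ℝ).map Complex.ofReal) <
      ENNReal.ofReal ρ ↔ (T, S) ∈ juryRegion ρ := by
  have hmap : (!![T, S; 1, 0] : Matrix (Fin 2) (Fin 2) ℝ).map Complex.ofReal =
      !![(T : ℂ), (S : ℂ); 1, 0] := by
    ext i j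
    fin_cases i <;> fin_cases j <;> simp
  rw [hmap]
  rcases le_or_gt 0 (T ^ 2 + 4 * S) with hdisc | hdisc
  · set x := (T + √(T ^ 2 + 4 * S)) / 2
    set y := (T - √(T ^ 2 + 4 * S)) / 2
    have hsum : x + y = T := by ring
    have hprod : x * y = -S := by
      linear_combination (-1 / 4 : ℝ) * Real.sq_sqrt hdisc
    rw [spectralRadius_companion (r₁ := (x : ℂ)) (r₂ := y) (by exact_mod_cast hsum)
      (by exact_mod_cast hprod), ENNReal.ofReal_lt_ofReal_iff hρ, max_lt_iff,
      Complex.norm_real, Complex.norm_real, Real.norm_eq_abs, Real.norm_eq_abs,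
      abs_lt_and_abs_lt_iff_mem_juryRegion hρ, hsum, hprod, neg_neg]
  · set z : ℂ := ⟨T / 2, √(-(T ^ 2 + 4 * S)) / 2⟩
    have hsum : 2 * z.re = T := by simp only [z]; ring
    have hnormSq : Complex.normSq z = -S := by
      simp only [Complex.normSq_apply, z]
      linear_combination (1 / 4 : ℝ) * Real.mul_self_sqrt (neg_nonneg.2 hdisc.le)
    rw [spectralRadius_companion (r₁ := z) (r₂ := (starRingEnd ℂ) z)
      (by rw [Complex.add_conj, hsum]) (by rw [Complex.mul_conj, hnormSq, Complex.ofReal_neg]),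
      ENNReal.ofReal_lt_ofReal_iff hρ, Complex.norm_conj, max_self,
      norm_lt_iff_mem_juryRegion hρ, hsum, hnormSq, neg_neg]

lemma quasiconvexOn_univ_of_convex_setOf_lt_ofReal {E : Type*} [AddCommMonoid E] [SMul ℝ E]
    {f : E → ENNReal} (h : ∀ ρ : ℝ, 0 < ρ → Convex ℝ {x | f x < ENNReal.ofReal ρ}) :
    QuasiconvexOn ℝ univ f := by
  refine quasiconvexOn_iff_le_max.2 ⟨convex_univ, fun x _ y _ a b ha hb hab => ?_⟩
  by_contra! hlt
  obtain ⟨r, hr, hrz⟩ := exists_between hlt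
  have hr_top : r ≠ ⊤ := hrz.ne_top
  have hsub := h r.toReal (ENNReal.toReal_pos (pos_of_gt hr).ne' hr_top)
  rw [ENNReal.ofReal_toReal hr_top] at hsub
  exact hrz.not_gt (hsub (max_lt_iff.1 hr).1 (max_lt_iff.1 hr).2 ha hb hab)

theorem stmt_3_general (α β η : ℝ)
    (M : ℝ → Matrix (Fin 2) (Fin 2) ℝ)
    (hM : ∀ q : ℝ, M q = !![β + 1 - α * (η + 1) * q, -β + α * η * q; 1, 0]) :
    (∀ ρ : ℝ, 0 < ρ →
      {q : ℝ | spectralRadius ℂ ((M q).map (Complex.ofReal)) < ENNReal.ofReal ρ}.OrdConnected) ∧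
    QuasiconvexOn ℝ Set.univ (fun q : ℝ => spectralRadius ℂ ((M q).map (Complex.ofReal))) := by
  have hline (q : ℝ) : AffineMap.lineMap (β + 1, -β) (β + 1 - α * (η + 1), -β + α * η) q =
      (β + 1 - α * (η + 1) * q, -β + α * η * q) := by
    simp only [AffineMap.lineMap_apply_module', Prod.mk_sub_mk, Prod.smul_mk, smul_eq_mul,
      Prod.mk_add_mk]
    congr 1 <;> ring
  have hconvex (ρ : ℝ) (hρ : 0 < ρ) :
      Convex ℝ {q : ℝ | spectralRadius ℂ ((M q).map Complex.ofReal) < ENNReal.ofReal ρ} := by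
    have hpreimage : {q : ℝ | spectralRadius ℂ ((M q).map Complex.ofReal) < ENNReal.ofReal ρ} =
        AffineMap.lineMap (β + 1, -β) (β + 1 - α * (η + 1), -β + α * η) ⁻¹' juryRegion ρ := by
      ext q
      rw [mem_ofPred_eq, hM, spectralRadius_companion_lt_iff hρ, mem_preimage, hline]
    rw [hpreimage]
    exact (convex_juryRegion ρ).affine_preimage _
  exact ⟨fun ρ hρ => (hconvex ρ hρ).ordConnected,
    quasiconvexOn_univ_of_convex_setOf_lt_ofReal hconvex⟩

theorem stmt_3 (α β η : ℝ) (hα : 0 < α)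
    (M : ℝ → Matrix (Fin 2) (Fin 2) ℝ)
    (hM : ∀ q : ℝ, M q = !![β + 1 - α * (η + 1) * q, -β + α * η * q; 1, 0]) :
    (∀ ρ : ℝ, 0 < ρ →
      {q : ℝ | spectralRadius ℂ ((M q).map (Complex.ofReal)) < ENNReal.ofReal ρ}.OrdConnected) ∧
    QuasiconvexOn ℝ Set.univ (fun q : ℝ => spectralRadius ℂ ((M q).map (Complex.ofReal))) :=
  stmt_3_general α β η M hM
end

section
/- Fix reals α, β, η, q with αq > 0, 2β + 2 − α(2η+1)q > 0, 1 + β − αηq > 0, and 1 − β + αηq > 0. Then ψ(q) := α(1 + β + (1+2η)αηq) / ( q(1 − β + αηq)(2 + 2β − (1+2η)αq) ) is positive and, as a function of q on the region where the four inequalities hold, satisfies ψ''(q) > 0 (it is strictly convex there). -/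
/-!
On the region cut out by the hypotheses, ψ splits into partial fractions
ψ(x) = α²(2η+1)² / (2 u(x) v(x)) + α² / (2 (αx) u(x)) with u(x) = 1 − β + αηx and
v(x) = 2 + 2β − (2η+1)αx, each a nonnegative multiple of the reciprocal of a product of two
positive affine functions. For such a reciprocal,
(1/(uv))'' = 2((u'v)² + (u'v)(v'u) + (v'u)²) / (uv)³, and the quadratic form s² + st + t² is
positive definite; since the factor αx has nonzero slope, the second summand is strictly convex.
-/

open Filter Topology

section IteratedDeriv

variable {𝕜 : Type*} [NontriviallyNormedField 𝕜]

theorem iteratedDeriv_two_eq_of_hasDerivAt {F : Type*} [NormedAddCommGroup F] [NormedSpace 𝕜 F]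
    {f f' : 𝕜 → F} {f'' : F} {x : 𝕜}
    (hf : ∀ᶠ y in 𝓝 x, HasDerivAt f (f' y) y) (hf' : HasDerivAt f' f'' x) :
    iteratedDeriv 2 f x = f'' := by
  have hderiv : deriv f =ᶠ[𝓝 x] f' := hf.mono fun _ hy => hy.deriv
  rw [iteratedDeriv_succ, iteratedDeriv_one, hderiv.deriv_eq, hf'.deriv]

theorem iteratedDeriv_two_inv {w w' : 𝕜 → 𝕜} {w'' x : 𝕜}
    (hw : ∀ᶠ y in 𝓝 x, HasDerivAt w (w' y) y) (hw' : HasDerivAt w' w'' x) (hx : w x ≠ 0) :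
    iteratedDeriv 2 (fun y => (w y)⁻¹) x = (2 * w' x ^ 2 - w x * w'') / w x ^ 3 := by
  have hne : ∀ᶠ y in 𝓝 x, w y ≠ 0 := hw.self_of_nhds.continuousAt.eventually_ne hx
  refine iteratedDeriv_two_eq_of_hasDerivAt (f' := fun y => -w' y / w y ^ 2) ?_ ?_
  · filter_upwards [hw, hne] with y hy hy0 using hy.inv hy0
  · refine (hw'.neg.div (hw.self_of_nhds.pow 2) (pow_ne_zero 2 hx)).congr_deriv ?_
    simp only [Pi.neg_apply, Pi.pow_apply]
    field_simp
    ring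

variable {p a r b x : 𝕜}

theorem iteratedDeriv_two_inv_mul_affine (hx : (p + a * x) * (r + b * x) ≠ 0) :
    iteratedDeriv 2 (fun y => ((p + a * y) * (r + b * y))⁻¹) x =
      2 * ((a * (r + b * x)) ^ 2 + a * (r + b * x) * (b * (p + a * x)) + (b * (p + a * x)) ^ 2) /
        ((p + a * x) * (r + b * x)) ^ 3 := by
  have hu (y : 𝕜) : HasDerivAt (fun y => p + a * y) a y := by
    simpa using ((hasDerivAt_id y).const_mul a).const_add p
  have hv (y : 𝕜) : HasDerivAt (fun y => r + b * y) b y := by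
    simpa using ((hasDerivAt_id y).const_mul b).const_add r
  have hw' : HasDerivAt (fun y => a * (r + b * y) + (p + a * y) * b) (a * b + a * b) x :=
    ((hv x).const_mul a).add ((hu x).mul_const b)
  rw [iteratedDeriv_two_inv (w := fun y => (p + a * y) * (r + b * y))
    (Eventually.of_forall fun y => (hu y).mul (hv y)) hw' hx]
  ring

end IteratedDeriv

section ConvexReciprocal

theorem sq_add_mul_add_sq_nonneg {R : Type*} [CommRing R] [LinearOrder R] [IsStrictOrderedRing R]
    (s t : R) : 0 ≤ s ^ 2 + s * t + t ^ 2 := by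
  nlinarith [sq_nonneg (s + t), sq_nonneg s, sq_nonneg t]

theorem sq_add_mul_add_sq_pos {R : Type*} [CommRing R] [LinearOrder R] [IsStrictOrderedRing R]
    {s : R} (t : R) (hs : s ≠ 0) : 0 < s ^ 2 + s * t + t ^ 2 := by
  nlinarith [sq_nonneg (s + t), sq_nonneg t, sq_pos_of_ne_zero hs]

variable {p a r b x : ℝ}

theorem iteratedDeriv_two_inv_mul_affine_nonneg (hx : 0 < (p + a * x) * (r + b * x)) :
    0 ≤ iteratedDeriv 2 (fun y => ((p + a * y) * (r + b * y))⁻¹) x := by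
  rw [iteratedDeriv_two_inv_mul_affine hx.ne']
  exact div_nonneg (mul_nonneg zero_le_two (sq_add_mul_add_sq_nonneg _ _)) (pow_nonneg hx.le 3)

theorem iteratedDeriv_two_inv_mul_affine_pos (ha : a ≠ 0) (hx : 0 < (p + a * x) * (r + b * x)) :
    0 < iteratedDeriv 2 (fun y => ((p + a * y) * (r + b * y))⁻¹) x := by
  rw [iteratedDeriv_two_inv_mul_affine hx.ne']
  have hs : a * (r + b * x) ≠ 0 := mul_ne_zero ha (right_ne_zero_of_mul hx.ne')
  exact div_pos (mul_pos zero_lt_two (sq_add_mul_add_sq_pos _ hs)) (pow_pos hx 3)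

end ConvexReciprocal

-- The affine factors are written in the shape `p + a * y` of `iteratedDeriv_two_inv_mul_affine`.
theorem psi_partial_fractions {α β η y : ℝ} (hy : y ≠ 0) (hu : 1 - β + α * η * y ≠ 0)
    (hv : 2 + 2 * β - (1 + 2 * η) * α * y ≠ 0) :
    α * (1 + β + (1 + 2 * η) * α * η * y) /
        (y * (1 - β + α * η * y) * (2 + 2 * β - (1 + 2 * η) * α * y)) =
      (α * (1 + 2 * η)) ^ 2 / 2 *
          ((1 - β + α * η * y) * (2 + 2 * β + -((1 + 2 * η) * α) * y))⁻¹ +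
        α ^ 2 / 2 * ((0 + α * y) * (1 - β + α * η * y))⁻¹ := by
  simp only [zero_add, neg_mul, ← sub_eq_add_neg]
  set v := 2 + 2 * β - (1 + 2 * η) * α * y with hv_def
  field_simp
  rw [hv_def]
  ring

theorem stmt_4_general (α β η q : ℝ)
    (h1 : 0 < α * q) (h2 : 0 < 2 * β + 2 - α * (2 * η + 1) * q)
    (h4 : 0 < 1 - β + α * η * q) :
    let ψ : ℝ → ℝ := fun q =>
      α * (1 + β + (1 + 2 * η) * α * η * q) /
        (q * (1 - β + α * η * q) * (2 + 2 * β - (1 + 2 * η) * α * q))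
    0 < ψ q ∧ 0 < iteratedDeriv 2 ψ q := by
  intro ψ
  have hα : α ≠ 0 := left_ne_zero_of_mul h1.ne'
  have huv : 0 < (1 - β + α * η * q) * (2 + 2 * β + -((1 + 2 * η) * α) * q) :=
    mul_pos h4 (by linarith)
  have hxu : 0 < (0 + α * q) * (1 - β + α * η * q) := by rw [zero_add]; exact mul_pos h1 h4
  have hsplit : ψ =ᶠ[𝓝 q] fun y =>
      (α * (1 + 2 * η)) ^ 2 / 2 *
          ((1 - β + α * η * y) * (2 + 2 * β + -((1 + 2 * η) * α) * y))⁻¹ +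
        α ^ 2 / 2 * ((0 + α * y) * (1 - β + α * η * y))⁻¹ := by
    have hcont : Continuous fun y : ℝ =>
        y * (1 - β + α * η * y) * (2 + 2 * β - (1 + 2 * η) * α * y) := by fun_prop
    have hq : q * (1 - β + α * η * q) * (2 + 2 * β - (1 + 2 * η) * α * q) ≠ 0 :=
      mul_ne_zero (mul_ne_zero (right_ne_zero_of_mul h1.ne') h4.ne')
        (by linarith : (0 : ℝ) < _).ne'
    filter_upwards [hcont.continuousAt.eventually_ne hq] with y hy
    obtain ⟨hyu, hv⟩ := mul_ne_zero_iff.1 hy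
    obtain ⟨hy, hu⟩ := mul_ne_zero_iff.1 hyu
    exact psi_partial_fractions hy hu hv
  constructor
  · rw [hsplit.eq_of_nhds]
    exact add_pos_of_nonneg_of_pos (mul_nonneg (by positivity) (inv_pos.2 huv).le)
      (mul_pos (by positivity) (inv_pos.2 hxu))
  · rw [hsplit.iteratedDeriv_eq, iteratedDeriv_fun_add (by fun_prop (disch := exact huv.ne'))
      (by fun_prop (disch := exact hxu.ne')), iteratedDeriv_const_mul_field,
      iteratedDeriv_const_mul_field]
    exact add_pos_of_nonneg_of_pos
      (mul_nonneg (by positivity) (iteratedDeriv_two_inv_mul_affine_nonneg huv))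
      (mul_pos (by positivity) (iteratedDeriv_two_inv_mul_affine_pos hα hxu))

theorem stmt_4 (α β η q : ℝ)
    (h1 : 0 < α * q) (h2 : 0 < 2 * β + 2 - α * (2 * η + 1) * q)
    (h3 : 0 < 1 + β - α * η * q) (h4 : 0 < 1 - β + α * η * q) :
    let ψ : ℝ → ℝ := fun q =>
      α * (1 + β + (1 + 2 * η) * α * η * q) /
        (q * (1 - β + α * η * q) * (2 + 2 * β - (1 + 2 * η) * α * q))
    0 < ψ q ∧ 0 < iteratedDeriv 2 ψ q :=
  stmt_4_general α β η q h1 h2 h4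
end

section
/- Fix reals m, L, α, β, η with 0 < m ≤ L. Suppose that for every q ∈ [m, L] the quadratic z² + (α(η+1)q − β − 1)z + (β − αηq) has both roots of modulus strictly less than 1. Then 0 < α < 4/L, −2/(L−m) < αη < 2/(L−m) (when m < L), and: if αη ≥ 0 then −1 + L(αη) < β < 1 + m(αη), while if αη < 0 then −1 + m(αη) < β < 1 + L(αη). -/
/-!
Each root condition is tested only at the endpoints `q = m` and `q = L`. For a real monic
quadratic `z² + b z + c` with both roots in the open unit disc, `p(1) = 1 + b + c` and
`p(-1) = 1 - b + c` are positive (otherwise `p` has a real root of modulus at least `1` by the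
intermediate value theorem), and `|c| < 1` since `c` is the product of the roots. For the
characteristic polynomial, `p(1) = α q`, `p(-1) = 2 + 2β - α(2η+1)q` and `c = β - αηq`, and the
claimed bounds are linear combinations of these inequalities at `q = m` and `q = L`.
-/

def QuadSchurStable (b c : ℝ) : Prop :=
  ∀ z : ℂ, z ^ 2 + (b : ℂ) * z + (c : ℂ) = 0 → ‖z‖ < 1

namespace QuadSchurStable

variable {b c : ℝ}

theorem neg (h : QuadSchurStable b c) : QuadSchurStable (-b) c := fun z hz => by
  simpa using h (-z) (by push_cast at hz ⊢; linear_combination hz)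

theorem one_add_add_pos (h : QuadSchurStable b c) : 0 < 1 + b + c := by
  by_contra! hle
  set t := 1 + |b| + |c|
  have ht : 1 ≤ t := by linarith [abs_nonneg b, abs_nonneg c]
  have hpt : 0 ≤ t ^ 2 + b * t + c := by
    nlinarith [mul_nonneg (neg_le_iff_add_nonneg.1 (neg_abs_le b)) (by linarith : (0 : ℝ) ≤ t),
      neg_abs_le c, abs_nonneg c]
  obtain ⟨x, ⟨hx1, -⟩, hx⟩ := intermediate_value_Icc ht
    (f := fun x : ℝ => x ^ 2 + b * x + c) (by fun_prop) ⟨by simpa using hle, hpt⟩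
  have hxz := h x (by exact_mod_cast hx)
  rw [Complex.norm_real, Real.norm_eq_abs] at hxz
  linarith [le_abs_self x]

theorem one_sub_add_pos (h : QuadSchurStable b c) : 0 < 1 - b + c := by
  simpa [sub_eq_add_neg] using h.neg.one_add_add_pos

theorem abs_lt_one (h : QuadSchurStable b c) : |c| < 1 := by
  obtain ⟨w, hw⟩ := IsAlgClosed.exists_pow_nat_eq ((b : ℂ) ^ 2 - 4 * c) two_pos
  have hr := h ((-b + w) / 2) (by linear_combination hw / 4)
  have hs := h ((-b - w) / 2) (by linear_combination hw / 4)
  have hc : (c : ℂ) = (-b + w) / 2 * ((-b - w) / 2) := by linear_combination hw / 4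
  calc |c| = ‖(c : ℂ)‖ := by rw [Complex.norm_real, Real.norm_eq_abs]
    _ = ‖(-b + w) / 2‖ * ‖(-b - w) / 2‖ := by rw [hc, norm_mul]
    _ < 1 := mul_lt_one_of_nonneg_of_lt_one_left (norm_nonneg _) hr hs.le

end QuadSchurStable

theorem stmt_5 (m L α β η : ℝ) (hm : 0 < m) (hmL : m ≤ L)
    (hroots : ∀ q : ℝ, m ≤ q → q ≤ L → ∀ z : ℂ,
      z ^ 2 + ((α * (η + 1) * q - β - 1 : ℝ) : ℂ) * z + ((β - α * η * q : ℝ) : ℂ) = 0 →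
      ‖z‖ < 1) :
    (0 < α ∧ α < 4 / L) ∧
    (m < L → -2 / (L - m) < α * η ∧ α * η < 2 / (L - m)) ∧
    (0 ≤ α * η → -1 + L * (α * η) < β ∧ β < 1 + m * (α * η)) ∧
    (α * η < 0 → -1 + m * (α * η) < β ∧ β < 1 + L * (α * η)) := by
  have hstable_m : QuadSchurStable _ _ := hroots m le_rfl hmL
  have hstable_L : QuadSchurStable _ _ := hroots L hmL le_rfl
  have hpm_one := hstable_m.one_add_add_pos
  have hpL_neg_one := hstable_L.one_sub_add_pos
  obtain ⟨hcm_lo, hcm_hi⟩ := abs_lt.1 hstable_m.abs_lt_one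
  obtain ⟨hcL_lo, hcL_hi⟩ := abs_lt.1 hstable_L.abs_lt_one
  have hα : 0 < α := pos_of_mul_pos_left (by linarith : 0 < α * m) hm.le
  refine ⟨⟨hα, ?_⟩, fun hlt => ⟨?_, ?_⟩, fun _ => ⟨?_, ?_⟩, fun _ => ⟨?_, ?_⟩⟩
  · rw [lt_div_iff₀ (hm.trans_le hmL)]
    linarith
  · rw [div_lt_iff₀ (sub_pos.2 hlt)]
    linarith
  · rw [lt_div_iff₀ (sub_pos.2 hlt)]
    linarith
  all_goals linarith
end

section
/- Let 0 < m ≤ L and (L−m)/(L+m) ≤ ρ < 1, α = (1−ρ)/m, λ = ρ/(m(L−m)(ρ+1)) (take L > m), P = 1/(1−ρ²). Then the 2×2 matrix with entries [ (1−ρ²)P − 2mLλ , −αP + (L+m)λ ; −αP + (L+m)λ , α²P − 2λ ] equals −c · [ m, −1; −1, 1/m ] where c = (L+m)/(m(L−m)(1+ρ)) · (ρ − (L−m)/(L+m)) ≥ 0; in particular this matrix is negative semidefinite. -/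
/-!
Clearing denominators, every entry of the LMI matrix is a multiple of `ρ - (L - m)/(L + m)`,
which is nonnegative by the choice of `ρ`. The remaining factor `[m, -1; -1, 1/m]` is the rank-one
matrix `m⁻¹ • v vᵀ` with `v = (m, -1)`, hence positive semidefinite.
-/

open Matrix

lemma fin_two_sector_eq_smul_vecMulVec {m : ℝ} (hm : m ≠ 0) :
    !![m, -1; -1, 1 / m] = m⁻¹ • vecMulVec ![m, -1] ![m, -1] := by
  ext i j
  fin_cases i <;> fin_cases j <;> simp <;> field_simp

lemma posSemidef_fin_two_sector {m : ℝ} (hm : 0 < m) :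
    (!![m, -1; -1, 1 / m] : Matrix (Fin 2) (Fin 2) ℝ).PosSemidef := by
  rw [fin_two_sector_eq_smul_vecMulVec hm.ne']
  simpa using (posSemidef_vecMulVec_self_star ![m, -1]).smul (inv_nonneg.mpr hm.le)

theorem stmt_7 (m L ρ : ℝ) (hm : 0 < m) (hmL : m < L)
    (hρ1 : (L - m) / (L + m) ≤ ρ) (hρ2 : ρ < 1) :
    let α := (1 - ρ) / m
    let lam := ρ / (m * (L - m) * (ρ + 1))
    let P := 1 / (1 - ρ ^ 2)
    let c := (L + m) / (m * (L - m) * (1 + ρ)) * (ρ - (L - m) / (L + m))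
    let X : Matrix (Fin 2) (Fin 2) ℝ :=
      !![(1 - ρ ^ 2) * P - 2 * m * L * lam, -α * P + (L + m) * lam;
         -α * P + (L + m) * lam, α ^ 2 * P - 2 * lam]
    X = -c • !![m, -1; -1, 1 / m] ∧ 0 ≤ c ∧ (-X).PosSemidef := by
  intro α lam P c X
  have hLm : 0 < L - m := sub_pos.mpr hmL
  have hLpm : 0 < L + m := by linarith
  have hρ : 0 < ρ := (div_pos hLm hLpm).trans_le hρ1
  have h1ρ2 : 0 < 1 - ρ ^ 2 := by nlinarith
  have hc : 0 ≤ c := mul_nonneg (by positivity) (sub_nonneg.mpr hρ1)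
  have hX : X = -c • !![m, -1; -1, 1 / m] := by
    ext i j
    fin_cases i <;> fin_cases j <;> simp [X, α, lam, P, c] <;> field_simp <;> ring
  refine ⟨hX, hc, ?_⟩
  rw [hX, neg_smul, neg_neg]
  exact (posSemidef_fin_two_sector hm).smul hc
end

section
/- Let 0 < m < L and (L−m)/(L+m) ≤ ρ < 1, and suppose (1−ρ)²/m ≤ α ≤ (1−ρ²)/m. With η = (β−ρ)/(mα) + ρ/(1−ρ) and β = ρ(2m²α²L − mα(1−ρ)(L(3−ρ) + m(1−3ρ)) + (L+m)(1−ρ)⁴) / ((L−m)(1−ρ)((1−ρ)³ − mα(1+ρ))), consider the 2×2 matrix N = A + mBC where A = [1+β, −β; 1, 0], B = [−α; 0], C = [1+η, −η]. Then the eigenvalues of N are ρ and (1 − ρ − αm)/(1 − ρ), and both have absolute value at most ρ. -/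
open Polynomial in
lemma charpoly_fin_two' (M : Matrix (Fin 2) (Fin 2) ℝ) :
    M.charpoly = X ^ 2 - C M.trace * X + C M.det := by
  rw [Matrix.charpoly, Matrix.det_fin_two]
  simp [Matrix.charmatrix_apply, Matrix.trace_fin_two, Matrix.det_fin_two]
  ring

open Polynomial in
theorem stmt_10 (m L ρ α β η : ℝ) (hm : 0 < m) (hmL : m < L)
    (hρ1 : (L - m) / (L + m) ≤ ρ) (hρ2 : ρ < 1)
    (hα1 : (1 - ρ) ^ 2 / m ≤ α) (hα2 : α ≤ (1 - ρ ^ 2) / m)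
    (hβ : β = ρ * (2 * m ^ 2 * α ^ 2 * L - m * α * (1 - ρ) * (L * (3 - ρ) + m * (1 - 3 * ρ))
        + (L + m) * (1 - ρ) ^ 4) /
      ((L - m) * (1 - ρ) * ((1 - ρ) ^ 3 - m * α * (1 + ρ))))
    (hη : η = (β - ρ) / (m * α) + ρ / (1 - ρ))
    (A : Matrix (Fin 2) (Fin 2) ℝ) (B : Matrix (Fin 2) (Fin 1) ℝ) (C : Matrix (Fin 1) (Fin 2) ℝ)
    (hA : A = !![1 + β, -β; 1, 0]) (hB : B = !![-α; 0]) (hC : C = !![1 + η, -η]) :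
    (A + m • (B * C)).charpoly =
        (X - Polynomial.C ρ) * (X - Polynomial.C ((1 - ρ - α * m) / (1 - ρ))) ∧
      |ρ| ≤ ρ ∧ |(1 - ρ - α * m) / (1 - ρ)| ≤ ρ := by
  have h1ρ : (0:ℝ) < 1 - ρ := by linarith
  have hρ0 : 0 ≤ ρ := le_trans (div_nonneg (by linarith) (by linarith)) hρ1
  have hα0 : 0 < α := lt_of_lt_of_le (by positivity) hα1
  have hαm1 : (1 - ρ) ^ 2 ≤ α * m := by
    rw [div_le_iff₀ hm] at hα1; linarith
  have hαm2 : α * m ≤ 1 - ρ ^ 2 := by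
    rw [le_div_iff₀ hm] at hα2; exact hα2
  refine ⟨?_, le_of_eq (abs_of_nonneg hρ0), ?_⟩
  · subst hA hB hC hη
    rw [show (!![1 + β, -β; 1, 0] + m • (!![-α; 0] * !![1 + ((β - ρ) / (m * α) + ρ / (1 - ρ)),
        -((β - ρ) / (m * α) + ρ / (1 - ρ))])) =
        !![1 + β + m * (-α * (1 + ((β - ρ) / (m * α) + ρ / (1 - ρ)))),
           -β + m * (-α * -((β - ρ) / (m * α) + ρ / (1 - ρ))); 1, 0] from by
      ext i j; fin_cases i <;> fin_cases j <;>
        simp [Matrix.mul_apply, Fin.sum_univ_succ] <;> ring]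
    rw [charpoly_fin_two']
    have hma : m * α ≠ 0 := by positivity
    have h1ρ' : (1 - ρ) ≠ 0 := ne_of_gt h1ρ
    simp only [Matrix.trace_fin_two_of, Matrix.det_fin_two_of]
    have ht : 1 + β + m * (-α * (1 + ((β - ρ) / (m * α) + ρ / (1 - ρ)))) + 0 =
        ρ + (1 - ρ - α * m) / (1 - ρ) := by field_simp; ring
    have hd : (1 + β + m * (-α * (1 + ((β - ρ) / (m * α) + ρ / (1 - ρ))))) * 0 -
        (-β + m * (-α * -((β - ρ) / (m * α) + ρ / (1 - ρ)))) * 1 =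
        ρ * ((1 - ρ - α * m) / (1 - ρ)) := by field_simp; ring
    rw [ht, hd]; simp only [map_add, map_mul]; ring
  · rw [abs_le]
    constructor
    · rw [le_div_iff₀ h1ρ]; nlinarith
    · rw [div_le_iff₀ h1ρ]; nlinarith
end

section
/- Let 0 < m ≤ L and 1 − √(m/L) ≤ ρ < 1. Define α = (1+ρ)(1−ρ)²/m, β = ρ(L(1−ρ+2ρ²) − m(1+ρ))/((L−m)(3−ρ)), η = ρ(L(1−ρ²) − m(1+2ρ−ρ²))/((L−m)(3−ρ)(1−ρ²)) (assume m < L). Then the 2×2 matrix A + mBC, where A = [1+β, −β; 1, 0], B = [−α; 0], C = [1+η, −η], has spectral radius exactly ρ. -/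
/-! Substituting the RAM parameters collapses the closed-loop matrix on the quadratic
`(m/2)‖y‖²` to the companion matrix `!![ρ + ρ², -ρ³; 1, 0]`, whose characteristic polynomial
is `(z - ρ)(z - ρ²)`. Its spectrum is therefore `{ρ, ρ²}`, and since `0 < ρ < 1` the larger
modulus is `ρ`. -/

open scoped ENNReal

theorem spectrum_companion_fin_two {K : Type*} [Field K] (a b : K) :
    spectrum K !![a + b, -(a * b); 1, 0] = {a, b} := by
  ext z
  have hdet : (algebraMap K (Matrix (Fin 2) (Fin 2) K) z - !![a + b, -(a * b); 1, 0]).det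
      = (z - a) * (z - b) := by
    rw [Matrix.algebraMap_eq_diagonal, Matrix.det_fin_two]
    simp
    ring
  rw [spectrum.mem_iff, Matrix.isUnit_iff_isUnit_det, hdet, isUnit_iff_ne_zero, not_not,
    mul_eq_zero, sub_eq_zero, sub_eq_zero, Set.mem_insert_iff, Set.mem_singleton_iff]

theorem spectralRadius_of_spectrum_eq_pair {𝕜 A : Type*} [NormedField 𝕜] [Ring A]
    [Algebra 𝕜 A] {x : A} {a b : 𝕜} (h : spectrum 𝕜 x = {a, b}) :
    spectralRadius 𝕜 x = (‖a‖₊ : ℝ≥0∞) ⊔ ‖b‖₊ := by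
  rw [spectralRadius, h, iSup_insert, iSup_singleton]

theorem closedLoop_eq (m α β η : ℝ) :
    !![1 + β, -β; 1, 0] + m • (!![-α; 0] * !![1 + η, -η]) =
      !![1 + β - m * α * (1 + η), -(β - m * α * η); 1, 0] := by
  ext i j
  fin_cases i <;> fin_cases j <;> simp <;> ring

section RAM

variable (m L ρ : ℝ)

noncomputable def ramStepSize : ℝ := (1 + ρ) * (1 - ρ) ^ 2 / m

noncomputable def ramMomentum : ℝ :=
  ρ * (L * (1 - ρ + 2 * ρ ^ 2) - m * (1 + ρ)) / ((L - m) * (3 - ρ))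

noncomputable def ramExtrapolation : ℝ :=
  ρ * (L * (1 - ρ ^ 2) - m * (1 + 2 * ρ - ρ ^ 2)) / ((L - m) * (3 - ρ) * (1 - ρ ^ 2))

variable {m L ρ}

theorem ram_closedLoop_eq_companion (hm : m ≠ 0) (hLm : L - m ≠ 0) (h3 : 3 - ρ ≠ 0)
    (h1 : 1 - ρ ^ 2 ≠ 0) :
    !![1 + ramMomentum m L ρ, -ramMomentum m L ρ; 1, 0] +
        m • (!![-ramStepSize m ρ; 0] * !![1 + ramExtrapolation m L ρ, -ramExtrapolation m L ρ]) =
      !![ρ + ρ ^ 2, -(ρ * ρ ^ 2); 1, 0] := by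
  have htrace : 1 + ramMomentum m L ρ - m * ramStepSize m ρ * (1 + ramExtrapolation m L ρ) =
      ρ + ρ ^ 2 := by
    unfold ramMomentum ramStepSize ramExtrapolation
    field_simp
    ring
  have hdet : ramMomentum m L ρ - m * ramStepSize m ρ * ramExtrapolation m L ρ = ρ * ρ ^ 2 := by
    unfold ramMomentum ramStepSize ramExtrapolation
    field_simp
    ring
  rw [closedLoop_eq, htrace, hdet]

end RAM

theorem stmt_14 (m L ρ : ℝ) (hm : 0 < m) (hmL : m < L)
    (hρ1 : 1 - Real.sqrt (m / L) ≤ ρ) (hρ2 : ρ < 1) :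
    let α := (1 + ρ) * (1 - ρ) ^ 2 / m
    let β := ρ * (L * (1 - ρ + 2 * ρ ^ 2) - m * (1 + ρ)) / ((L - m) * (3 - ρ))
    let η := ρ * (L * (1 - ρ ^ 2) - m * (1 + 2 * ρ - ρ ^ 2)) / ((L - m) * (3 - ρ) * (1 - ρ ^ 2))
    let A : Matrix (Fin 2) (Fin 2) ℝ := !![1 + β, -β; 1, 0]
    let B : Matrix (Fin 2) (Fin 1) ℝ := !![-α; 0]
    let C : Matrix (Fin 1) (Fin 2) ℝ := !![1 + η, -η]
    spectralRadius ℂ ((A + m • (B * C)).map (Complex.ofReal)) = ENNReal.ofReal ρ := by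
  intro α β η A B C
  have hρ0 : 0 < ρ := by
    have : Real.sqrt (m / L) < 1 := by
      rw [Real.sqrt_lt' one_pos, one_pow]
      exact (div_lt_one (hm.trans hmL)).mpr hmL
    linarith
  have hM : A + m • (B * C) = !![ρ + ρ ^ 2, -(ρ * ρ ^ 2); 1, 0] :=
    ram_closedLoop_eq_companion hm.ne' (by linarith) (by linarith) (by nlinarith)
  have hMap : (!![ρ + ρ ^ 2, -(ρ * ρ ^ 2); 1, 0]).map Complex.ofReal =
      !![(ρ : ℂ) + (ρ : ℂ) ^ 2, -((ρ : ℂ) * (ρ : ℂ) ^ 2); 1, 0] := by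
    ext i j
    fin_cases i <;> fin_cases j <;> simp
  have hsq : ‖(ρ : ℂ) ^ 2‖₊ ≤ ‖(ρ : ℂ)‖₊ := by
    rw [← NNReal.coe_le_coe, coe_nnnorm, coe_nnnorm, norm_pow, Complex.norm_real,
      Real.norm_of_nonneg hρ0.le]
    nlinarith
  rw [hM, hMap, spectralRadius_of_spectrum_eq_pair (spectrum_companion_fin_two _ _),
    sup_eq_left.mpr (by exact_mod_cast hsq), Complex.nnnorm_real, ← enorm_eq_nnnorm,
    Real.enorm_eq_ofReal hρ0.le]
end

section
/- Let M ∈ ℝ^{n×n} with spectral radius strictly less than 1, C ∈ ℝ^{1×n}, B ∈ ℝ^{n×1}. Then the infimum of BᵀPB over symmetric P ⪰ 0 satisfying MᵀPM − P + CᵀC ⪯ 0 equals Σ_{k=0}^∞ (C M^k B)², and is attained by the unique solution of the Lyapunov equation MᵀPM − P + CᵀC = 0. -/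
/-!
Since every eigenvalue of `M` lies in the open unit disc, Gelfand's formula makes `‖M ^ k‖`
summable, so the observability Gramian `P = ∑ (C Mᵏ)ᵀ (C Mᵏ)` converges. Shifting the series
shows that `P` solves the Lyapunov equation `Mᵀ P M - P + Cᵀ C = 0`, and `Bᵀ P B = ∑ (C Mᵏ B)²`.
Conversely, if `Q ⪰ 0` satisfies the Lyapunov inequality, testing it against `Mᵏ B` gives
`(C Mᵏ B)² ≤ Gₖ - Gₖ₊₁` for `Gₖ = (Mᵏ B)ᵀ Q (Mᵏ B) ≥ 0`, and telescoping bounds the series by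
`G₀ = Bᵀ Q B`. The difference `D` of two solutions of the equation satisfies
`D = (Mᵏ)ᵀ D Mᵏ → 0`, whence uniqueness.
-/

open Matrix Filter Topology
-- The Frobenius norm is submultiplicative on rectangular matrices and invariant under transposition.
open scoped Matrix.Norms.Frobenius

section HasSum
variable {X R l m n : Type*} [Fintype m] [Semiring R] [TopologicalSpace R]
  [IsTopologicalSemiring R] {f : X → Matrix m n R} {a : Matrix m n R}

theorem HasSum.matrix_mul_left (A : Matrix l m R) (hf : HasSum f a) :
    HasSum (fun x => A * f x) (A * a) :=
  hf.map (⟨⟨(A * ·), Matrix.mul_zero A⟩, Matrix.mul_add A⟩ : Matrix m n R →+ Matrix l n R)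
    (continuous_const.matrix_mul continuous_id)

theorem HasSum.matrix_mul_right {f : X → Matrix l m R} {a : Matrix l m R} (B : Matrix m n R)
    (hf : HasSum f a) : HasSum (fun x => f x * B) (a * B) :=
  hf.map (⟨⟨(· * B), Matrix.zero_mul B⟩, fun _ _ => Matrix.add_mul _ _ B⟩ :
    Matrix l m R →+ Matrix l n R) (continuous_id.matrix_mul continuous_const)

end HasSum

theorem summable_norm_pow_of_spectralRadius_lt_one {A : Type*} [NormedRing A]
    [NormedAlgebra ℂ A] [CompleteSpace A] {a : A} (ha : spectralRadius ℂ a < 1) :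
    Summable fun k => ‖a ^ k‖ := by
  obtain ⟨r, hρr, hr1⟩ := ENNReal.lt_iff_exists_nnreal_btwn.mp ha
  refine .of_norm_bounded_eventually_nat (summable_geometric_of_lt_one r.2 (mod_cast hr1)) ?_
  filter_upwards [(spectrum.pow_norm_pow_one_div_tendsto_nhds_spectralRadius a).eventually_lt_const
    hρr, eventually_gt_atTop 0] with k hk hk0
  rw [ENNReal.ofReal_lt_coe_iff (by positivity), one_div] at hk
  have := (Real.rpow_inv_lt_iff_of_pos (norm_nonneg (a ^ k)) r.2 (Nat.cast_pos.mpr hk0)).mp hk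
  simpa using this.le

theorem summable_norm_pow_of_forall_spectrum_norm_lt_one {A : Type*} [NormedRing A]
    [NormedAlgebra ℂ A] [CompleteSpace A] {a : A} (ha : ∀ z ∈ spectrum ℂ a, ‖z‖ < 1) :
    Summable fun k => ‖a ^ k‖ := by
  rcases subsingleton_or_nontrivial A with hA | hA
  · simp [Subsingleton.elim _ (0 : A)]
  · refine summable_norm_pow_of_spectralRadius_lt_one ?_
    simpa using spectrum.spectralRadius_lt_of_forall_lt a (r := 1) fun z hz => mod_cast ha z hz

variable {ι κ : Type*} [Fintype ι] [Fintype κ]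

theorem Matrix.summable_norm_pow_of_forall_spectrum_norm_lt_one [DecidableEq ι] (M : Matrix ι ι ℝ)
    (hM : ∀ μ ∈ spectrum ℂ (M.map Complex.ofReal), ‖μ‖ < 1) : Summable fun k => ‖M ^ k‖ := by
  have h := _root_.summable_norm_pow_of_forall_spectrum_norm_lt_one hM
  have hpow : ∀ k, (M.map Complex.ofReal) ^ k = (M ^ k).map Complex.ofReal := fun k =>
    (map_pow Complex.ofRealHom.mapMatrix M k).symm
  simpa [hpow] using h

theorem Matrix.PosSemidef.of_hasSum {X : Type*} {f : X → Matrix ι ι ℝ} {a : Matrix ι ι ℝ}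
    (hf : HasSum f a) (h : ∀ x, (f x).PosSemidef) : a.PosSemidef := by
  refine .of_dotProduct_mulVec_nonneg ?_ fun v => ?_
  · exact hf.matrix_conjTranspose.unique (by simpa only [(h _).1.eq] using hf)
  · have hv : HasSum (fun x => star v ⬝ᵥ f x *ᵥ v) (star v ⬝ᵥ a *ᵥ v) :=
      hf.map (⟨⟨fun A => star v ⬝ᵥ A *ᵥ v, by simp⟩, fun A B => by
        simp [Matrix.add_mulVec, dotProduct_add]⟩ : Matrix ι ι ℝ →+ ℝ)
        (continuous_const.dotProduct (continuous_id.matrix_mulVec continuous_const))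
    exact hv.nonneg fun x => (h x).dotProduct_mulVec_nonneg v

theorem Matrix.PosSemidef.transpose_mul_mul_same {A : Matrix ι ι ℝ} (hA : A.PosSemidef)
    (W : Matrix ι κ ℝ) : (Wᵀ * A * W).PosSemidef := by
  simpa [conjTranspose_eq_transpose_of_trivial] using hA.conjTranspose_mul_mul_same W

theorem Matrix.posSemidef_transpose_mul_self (A : Matrix κ ι ℝ) : (Aᵀ * A).PosSemidef := by
  simpa [conjTranspose_eq_transpose_of_trivial] using posSemidef_conjTranspose_mul_self A

theorem Matrix.transpose_mul_self_apply_zero (A : Matrix (Fin 1) (Fin 1) ℝ) :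
    (Aᵀ * A) 0 0 = A 0 0 ^ 2 := by
  simp [Matrix.mul_apply, sq]

theorem Matrix.eq_zero_of_transpose_mul_mul_eq [DecidableEq ι] {M D : Matrix ι ι ℝ}
    (hM : Tendsto (M ^ ·) atTop (𝓝 0)) (hD : Mᵀ * D * M = D) : D = 0 := by
  have hconj : ∀ k, (M ^ k)ᵀ * D * M ^ k = D := by
    intro k
    induction k with
    | zero => simp
    | succ k ih =>
      calc (M ^ (k + 1))ᵀ * D * M ^ (k + 1) = (M ^ k)ᵀ * (Mᵀ * D * M) * M ^ k := by
            rw [pow_succ', transpose_mul]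
            simp only [Matrix.mul_assoc]
        _ = D := by rw [hD, ih]
  have hlim : Tendsto (fun k => (M ^ k)ᵀ * D * M ^ k) atTop (𝓝 ((0 : Matrix ι ι ℝ)ᵀ * D * 0)) :=
    (((continuous_id.matrix_transpose.tendsto _).comp hM).mul_const D).mul hM
  simp only [hconj, Matrix.mul_zero] at hlim
  exact tendsto_nhds_unique tendsto_const_nhds hlim

theorem Real.tsum_le_of_telescoping {a G : ℕ → ℝ} (ha : ∀ k, 0 ≤ a k) (hG : ∀ k, 0 ≤ G k)
    (h : ∀ k, a k + G (k + 1) ≤ G k) : ∑' k, a k ≤ G 0 := by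
  refine Real.tsum_le_of_sum_range_le ha fun N => ?_
  calc ∑ k ∈ Finset.range N, a k ≤ ∑ k ∈ Finset.range N, (G k - G (k + 1)) :=
        Finset.sum_le_sum fun k _ => by linarith [h k]
    _ = G 0 - G N := Finset.sum_range_sub' G N
    _ ≤ G 0 := by linarith [hG N]

theorem Matrix.lyapunov_solution_unique [DecidableEq ι] {M S P Q : Matrix ι ι ℝ}
    (hM : Tendsto (M ^ ·) atTop (𝓝 0)) (hP : Mᵀ * P * M - P + S = 0)
    (hQ : Mᵀ * Q * M - Q + S = 0) : P = Q := by
  refine sub_eq_zero.mp (eq_zero_of_transpose_mul_mul_eq hM ?_)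
  calc Mᵀ * (P - Q) * M = (Mᵀ * P * M - P + S) - (Mᵀ * Q * M - Q + S) + (P - Q) := by
        rw [Matrix.mul_sub, Matrix.sub_mul]; abel
    _ = P - Q := by rw [hP, hQ]; abel

theorem Matrix.tsum_sq_le_of_lyapunov_le [DecidableEq ι] {M Q : Matrix ι ι ℝ}
    {C : Matrix (Fin 1) ι ℝ} (B : Matrix ι (Fin 1) ℝ) (hQ : Q.PosSemidef)
    (hL : (-(Mᵀ * Q * M - Q + Cᵀ * C)).PosSemidef) :
    ∑' k : ℕ, ((C * M ^ k * B) 0 0) ^ 2 ≤ (Bᵀ * Q * B) 0 0 := by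
  have step (W : Matrix ι (Fin 1) ℝ) :
      ((C * W) 0 0) ^ 2 + ((M * W)ᵀ * Q * (M * W)) 0 0 ≤ (Wᵀ * Q * W) 0 0 := by
    have h := (hL.transpose_mul_mul_same W).diag_nonneg (i := 0)
    have e : Wᵀ * -(Mᵀ * Q * M - Q + Cᵀ * C) * W
        = Wᵀ * Q * W - (M * W)ᵀ * Q * (M * W) - (C * W)ᵀ * (C * W) := by
      simp only [Matrix.mul_neg, Matrix.neg_mul, Matrix.mul_add, Matrix.add_mul, Matrix.mul_sub,
        Matrix.sub_mul, transpose_mul, Matrix.mul_assoc]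
      abel
    rw [e] at h
    simp only [sub_apply, transpose_mul_self_apply_zero] at h
    linarith
  refine Real.tsum_le_of_telescoping (fun k => sq_nonneg _)
    (G := fun k => ((M ^ k * B)ᵀ * Q * (M ^ k * B)) 0 0)
    (fun k => (hQ.transpose_mul_mul_same _).diag_nonneg) (fun k => ?_) |>.trans_eq (by simp)
  simpa only [pow_succ', Matrix.mul_assoc] using step (M ^ k * B)

noncomputable def Matrix.observabilityGramian [DecidableEq ι] (M : Matrix ι ι ℝ)
    (C : Matrix κ ι ℝ) : Matrix ι ι ℝ :=
  ∑' k, (C * M ^ k)ᵀ * (C * M ^ k)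

namespace Matrix

variable [DecidableEq ι] {M : Matrix ι ι ℝ} (hM : Summable fun k => ‖M ^ k‖)
include hM

theorem hasSum_observabilityGramian (C : Matrix κ ι ℝ) :
    HasSum (fun k => (C * M ^ k)ᵀ * (C * M ^ k)) (M.observabilityGramian C) := by
  refine Summable.hasSum (.of_norm_bounded_eventually_nat (hM.mul_left (‖C‖ ^ 2)) ?_)
  filter_upwards [hM.tendsto_atTop_zero.eventually (eventually_le_nhds zero_lt_one)] with k hk
  calc ‖(C * M ^ k)ᵀ * (C * M ^ k)‖ ≤ ‖C * M ^ k‖ ^ 2 :=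
        (frobenius_norm_mul _ _).trans_eq (by rw [frobenius_norm_transpose, sq])
    _ ≤ (‖C‖ * ‖M ^ k‖) ^ 2 := by gcongr; exact frobenius_norm_mul C (M ^ k)
    _ = ‖C‖ ^ 2 * ‖M ^ k‖ ^ 2 := by ring
    _ ≤ ‖C‖ ^ 2 * ‖M ^ k‖ := by gcongr; exact pow_le_of_le_one (norm_nonneg _) hk two_ne_zero

theorem observabilityGramian_lyapunov (C : Matrix κ ι ℝ) :
    Mᵀ * M.observabilityGramian C * M - M.observabilityGramian C + Cᵀ * C = 0 := by
  have h := hasSum_observabilityGramian hM C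
  have hshift : HasSum (fun k => (C * M ^ (k + 1))ᵀ * (C * M ^ (k + 1)))
      (Mᵀ * M.observabilityGramian C * M) := by
    convert (h.matrix_mul_left Mᵀ).matrix_mul_right M using 2 with k
    simp only [pow_succ, ← Matrix.mul_assoc, transpose_mul]
  have hfix := h.unique ((hasSum_nat_add_iff 1).mp hshift)
  simp only [Finset.range_one, Finset.sum_singleton, pow_zero, Matrix.mul_one] at hfix
  rw [sub_add_eq_add_sub, ← hfix, sub_self]

theorem posSemidef_observabilityGramian (C : Matrix κ ι ℝ) :
    (M.observabilityGramian C).PosSemidef :=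
  .of_hasSum (hasSum_observabilityGramian hM C) fun _ => posSemidef_transpose_mul_self _

theorem transpose_mul_observabilityGramian_mul (C : Matrix (Fin 1) ι ℝ)
    (B : Matrix ι (Fin 1) ℝ) :
    (Bᵀ * M.observabilityGramian C * B) 0 0 = ∑' k : ℕ, ((C * M ^ k * B) 0 0) ^ 2 := by
  have h := (hasSum_observabilityGramian hM C).matrix_mul_left Bᵀ |>.matrix_mul_right B
  refine ((Pi.hasSum.mp (Pi.hasSum.mp h 0) 0).tsum_eq.symm).trans (tsum_congr fun k => ?_)
  rw [← transpose_mul_self_apply_zero]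
  simp only [transpose_mul, Matrix.mul_assoc]

end Matrix

theorem stmt_18 (n : ℕ) (M : Matrix (Fin n) (Fin n) ℝ)
    (hM : ∀ μ : ℂ, μ ∈ spectrum ℂ (M.map (Complex.ofReal)) → ‖μ‖ < 1)
    (B : Matrix (Fin n) (Fin 1) ℝ) (C : Matrix (Fin 1) (Fin n) ℝ) :
    IsLeast {x : ℝ | ∃ P : Matrix (Fin n) (Fin n) ℝ, P.PosSemidef ∧
        (-(Mᵀ * P * M - P + Cᵀ * C)).PosSemidef ∧ x = (Bᵀ * P * B) 0 0}
      (∑' k : ℕ, ((C * M ^ k * B) 0 0) ^ 2) ∧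
    ∃! P : Matrix (Fin n) (Fin n) ℝ, Mᵀ * P * M - P + Cᵀ * C = 0 ∧
      P.PosSemidef ∧ (Bᵀ * P * B) 0 0 = ∑' k : ℕ, ((C * M ^ k * B) 0 0) ^ 2 := by
  have hsum := M.summable_norm_pow_of_forall_spectrum_norm_lt_one hM
  have hpow : Tendsto (M ^ ·) atTop (𝓝 0) :=
    tendsto_zero_iff_norm_tendsto_zero.mpr hsum.tendsto_atTop_zero
  have hLyap := observabilityGramian_lyapunov hsum C
  have hPsd := posSemidef_observabilityGramian hsum C
  have hVal := transpose_mul_observabilityGramian_mul hsum C B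
  refine ⟨⟨⟨_, hPsd, ?_, hVal.symm⟩, ?_⟩, ⟨_, ⟨hLyap, hPsd, hVal⟩, ?_⟩⟩
  · simpa [hLyap] using PosSemidef.zero
  · rintro x ⟨Q, hQ, hL, rfl⟩
    exact tsum_sq_le_of_lyapunov_le B hQ hL
  · rintro Q ⟨hQ, -, -⟩
    exact lyapunov_solution_unique hpow hQ hLyap
end
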